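/- arXiv:0906.2517 — 3 statements merged into one kernel-verified Lean document; each statement's English description precedes it below -/
import Mathlib

section
/- Let w ≥ 0, ν > 0, and let Φ : (0,∞) × T³ → ℝ be a smooth solution of Φ'' + (2ν+1)/η·Φ' = wΔΦ, where Δ is the flat Laplacian on the torus T³ and ' denotes ∂/∂η. Define E₁(η) = (1/2)∫_{T³} (|Φ'(η,·)|² + w|∇Φ(η,·)|²). Then d/dη [η^{2(2ν+1)} E₁(η)] = (2ν+1)·η^{4ν+1}·∫_{T³} w|∇Φ(η,·)|². -/
open MeasureTheory

/-- The unit cell of the torus `T³`, realized as the cube `[0,1]³ ⊆ ℝ³`. -/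
noncomputable def torusBox : Set (Fin 3 → ℝ) := Set.Icc (fun _ => 0) (fun _ => 1)

/-- A function on `ℝ³` descending to the torus `T³ = ℝ³/ℤ³`. -/
def Periodic3 (u : (Fin 3 → ℝ) → ℝ) : Prop :=
  ∀ (x : Fin 3 → ℝ) (i : Fin 3), u (x + Pi.single i 1) = u x

/-- Partial derivative in the `i`-th coordinate direction. -/
noncomputable def pd (u : (Fin 3 → ℝ) → ℝ) (i : Fin 3) (x : Fin 3 → ℝ) : ℝ :=
  fderiv ℝ u x (Pi.single i 1)

/-- The flat Laplacian on `T³`. -/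
noncomputable def lap3 (u : (Fin 3 → ℝ) → ℝ) (x : Fin 3 → ℝ) : ℝ :=
  ∑ i, pd (pd u i) i x

/-- The squared norm of the flat spatial gradient. -/
noncomputable def gradSq (u : (Fin 3 → ℝ) → ℝ) (x : Fin 3 → ℝ) : ℝ :=
  ∑ i, (pd u i x) ^ 2

lemma insertNth_one_eq (i : Fin 3) (x : Fin 2 → ℝ) :
    (i.insertNth (1:ℝ) x : Fin 3 → ℝ) = (i.insertNth 0 x : Fin 3 → ℝ) + Pi.single i 1 := by
  funext j
  refine Fin.succAboveCases i ?_ ?_ j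
  · simp
  · intro k
    simp [Fin.insertNth_apply_succAbove, Pi.single_eq_of_ne (Fin.succAbove_ne i k)]

lemma periodic_div_integral_zero (f : (Fin 3 → ℝ) → (Fin 3 → ℝ))
    (f' : (Fin 3 → ℝ) → (Fin 3 → ℝ) →L[ℝ] (Fin 3 → ℝ))
    (hd : ∀ x, HasFDerivAt f (f' x) x)
    (hc : Continuous fun x => ∑ i, f' x (Pi.single i 1) i)
    (hp : ∀ x i, f (x + Pi.single i 1) i = f x i) :
    ∫ x in torusBox, ∑ i, f' x (Pi.single i 1) i = 0 := by
  have hcf : Continuous f := by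
    have : Differentiable ℝ f := fun x => (hd x).differentiableAt
    exact this.continuous
  have key := integral_divergence_of_hasFDerivAt_off_countable
    (a := fun _ : Fin 3 => (0:ℝ)) (b := fun _ => 1)
    (by intro i; norm_num) f f' ∅ Set.countable_empty hcf.continuousOn
    (fun x hx => hd x)
    ((hc.continuousOn).integrableOn_compact isCompact_Icc)
  rw [show (Set.Icc (fun _ : Fin 3 => (0:ℝ)) fun _ => 1) = torusBox from rfl] at key
  rw [key]
  apply Finset.sum_eq_zero
  intro i _
  have : ∀ x : Fin 2 → ℝ, f (i.insertNth ((fun _ : Fin 3 => (1:ℝ)) i) x) i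
      = f (i.insertNth ((fun _ : Fin 3 => (0:ℝ)) i) x) i := by
    intro x
    simp only []
    rw [insertNth_one_eq, hp]
  simp only [this, sub_self]

lemma hasDerivAt_integral_box (F F' : ℝ → (Fin 3 → ℝ) → ℝ) (η : ℝ)
    (hF : Continuous fun p : ℝ × (Fin 3 → ℝ) => F p.1 p.2)
    (hF' : Continuous fun p : ℝ × (Fin 3 → ℝ) => F' p.1 p.2)
    (hd : ∀ t x, HasDerivAt (fun s => F s x) (F' t x) t) :
    HasDerivAt (fun t => ∫ x in torusBox, F t x) (∫ x in torusBox, F' η x) η := by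
  have hbox : IsCompact torusBox := isCompact_Icc
  have hmeas : MeasurableSet torusBox := measurableSet_Icc
  have hcF : ∀ t, Continuous (F t) := fun t =>
    hF.comp (continuous_const.prodMk continuous_id)
  have hcF' : ∀ t, Continuous (F' t) := fun t =>
    hF'.comp (continuous_const.prodMk continuous_id)
  obtain ⟨C, hC⟩ := ((isCompact_closedBall η 1).prod hbox).exists_bound_of_continuousOn
    hF'.continuousOn
  have hFint : Integrable (F η) (volume.restrict torusBox) := by
    rw [← IntegrableOn]
    exact ((hcF η).continuousOn).integrableOn_compact hbox
  have hbd : Integrable (fun _ : Fin 3 → ℝ => C) (volume.restrict torusBox) := by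
    rw [← IntegrableOn]
    exact integrableOn_const hbox.measure_lt_top.ne
  have main := hasDerivAt_integral_of_dominated_loc_of_deriv_le
    (μ := volume.restrict torusBox) (F := F) (F' := F') (x₀ := η)
    (bound := fun _ => C) (Metric.ball_mem_nhds η one_pos)
    (Filter.Eventually.of_forall fun t => (hcF t).aestronglyMeasurable)
    hFint
    ((hcF' η).aestronglyMeasurable)
    ?_ hbd
    (Filter.Eventually.of_forall fun x => fun t _ => hd t x)
  · exact main.2
  · filter_upwards [ae_restrict_mem hmeas] with x hx
    intro t ht
    exact hC (t, x) ⟨Metric.ball_subset_closedBall ht, hx⟩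


set_option maxHeartbeats 2000000 in
/-- Energy identity: for a smooth solution of `Φ'' + (2ν+1)/η · Φ' = wΔΦ` on
`(0,∞) × T³`, with `E₁(η) = (1/2)∫ (|Φ'|² + w|∇Φ|²)`, one has
`d/dη [η^{2(2ν+1)} E₁(η)] = (2ν+1) η^{4ν+1} ∫ w|∇Φ|²`. -/
theorem stmt_2 (w ν : ℝ) (hw : 0 ≤ w) (hν : 0 < ν)
    (Φ : ℝ → (Fin 3 → ℝ) → ℝ)
    (hsmooth : ContDiff ℝ (⊤ : ℕ∞) (fun p : ℝ × (Fin 3 → ℝ) => Φ p.1 p.2))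
    (hper : ∀ η, Periodic3 (Φ η))
    (heq : ∀ η > (0:ℝ), ∀ x, deriv (deriv (fun t => Φ t x)) η
        + (2 * ν + 1) / η * deriv (fun t => Φ t x) η = w * lap3 (Φ η) x)
    (E₁ : ℝ → ℝ)
    (hE : ∀ η, E₁ η = (1 / 2) *
        ∫ x in torusBox, ((deriv (fun t => Φ t x) η) ^ 2 + w * gradSq (Φ η) x)) :
    ∀ η > (0:ℝ), HasDerivAt (fun t => t ^ (2 * (2 * ν + 1)) * E₁ t)
      ((2 * ν + 1) * η ^ (4 * ν + 1) * ∫ x in torusBox, w * gradSq (Φ η) x) η := by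
  classical
  set P : ℝ × (Fin 3 → ℝ) → ℝ := fun p => Φ p.1 p.2 with hPdef
  set D : ℝ × (Fin 3 → ℝ) → (ℝ × (Fin 3 → ℝ)) →L[ℝ] ℝ := fderiv ℝ P with hDdef
  set D2 : ℝ × (Fin 3 → ℝ) → (ℝ × (Fin 3 → ℝ)) →L[ℝ] ((ℝ × (Fin 3 → ℝ)) →L[ℝ] ℝ) :=
    fderiv ℝ D with hD2def
  have hP : ContDiff ℝ (⊤ : ℕ∞) P := hsmooth
  have hPdiff : Differentiable ℝ P := hP.differentiable (by simp)
  have hPd : ∀ p, HasFDerivAt P (D p) p := fun p => (hPdiff p).hasFDerivAt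
  have hDcd : ContDiff ℝ 2 D := hP.fderiv_right (WithTop.coe_le_coe.mpr le_top)
  have hDdiff : Differentiable ℝ D := hDcd.differentiable (by simp)
  have hDd : ∀ p, HasFDerivAt D (D2 p) p := fun p => (hDdiff p).hasFDerivAt
  have hDc : Continuous D := hDcd.continuous
  have hD2c : Continuous D2 := (hDcd.fderiv_right (m := 1) (by norm_num)).continuous
  have hsym : ∀ p u v, D2 p u v = D2 p v u := fun p => second_derivative_symmetric hPd (hDd p)
  -- curve s ↦ (s, x)
  have hcurve : ∀ (x : Fin 3 → ℝ) (t : ℝ), HasDerivAt (fun s : ℝ => (s, x))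
      ((1:ℝ), (0 : Fin 3 → ℝ)) t := fun x t => (hasDerivAt_id t).prodMk (hasDerivAt_const t x)
  -- time derivative of Φ
  have hΦt : ∀ (t : ℝ) x, HasDerivAt (fun s => Φ s x) (D (t, x) (1, 0)) t := fun t x =>
    (hPd (t, x)).comp_hasDerivAt (l := P) t (hcurve x t)
  have hΦtd : ∀ (t : ℝ) x, deriv (fun s => Φ s x) t = D (t, x) (1, 0) := fun t x =>
    (hΦt t x).deriv
  -- spatial derivative of Φ
  have hinr : ∀ (t : ℝ) x, HasFDerivAt (fun y : Fin 3 → ℝ => (t, y))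
      (ContinuousLinearMap.inr ℝ ℝ (Fin 3 → ℝ)) x := fun t x => hasFDerivAt_prodMk_right t x
  have hsp : ∀ (t : ℝ) x, HasFDerivAt (Φ t)
      ((D (t, x)).comp (ContinuousLinearMap.inr ℝ ℝ (Fin 3 → ℝ))) x := fun t x =>
    (hPd (t, x)).comp x (hinr t x)
  have hpd : ∀ (t : ℝ) x i, pd (Φ t) i x = D (t, x) (0, Pi.single i 1) := by
    intro t x i
    rw [pd, (hsp t x).fderiv]
    simp
  -- t-derivative of D along curve, applied to vectors
  have hDcurve : ∀ (t : ℝ) x, HasDerivAt (fun s => D (s, x)) (D2 (t, x) (1, 0)) t := fun t x =>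
    (hDd (t, x)).comp_hasDerivAt t (hcurve x t)
  have hDt : ∀ (v : ℝ × (Fin 3 → ℝ)) (t : ℝ) x,
      HasDerivAt (fun s => D (s, x) v) (D2 (t, x) (1, 0) v) t := fun v t x =>
    (ContinuousLinearMap.apply ℝ ℝ v).hasFDerivAt.comp_hasDerivAt t (hDcurve t x)
  -- spatial derivative of p ↦ D p v
  have hDx : ∀ (v : ℝ × (Fin 3 → ℝ)) (t : ℝ) x,
      HasFDerivAt (fun y => D (t, y) v)
        (((ContinuousLinearMap.apply ℝ ℝ v).comp (D2 (t, x))).comp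
          (ContinuousLinearMap.inr ℝ ℝ (Fin 3 → ℝ))) x := fun v t x =>
    (ContinuousLinearMap.apply ℝ ℝ v).hasFDerivAt.comp x ((hDd (t, x)).comp x (hinr t x))
  have hpd2 : ∀ (t : ℝ) x i, pd (pd (Φ t) i) i x
      = D2 (t, x) (0, Pi.single i 1) (0, Pi.single i 1) := by
    intro t x i
    have hfun : pd (Φ t) i = fun y => D (t, y) (0, Pi.single i 1) := funext fun y => hpd t y i
    rw [pd, hfun, (hDx (0, Pi.single i 1) t x).fderiv]
    simp
  -- periodicity of D
  have hDper : ∀ (t : ℝ) x (j : Fin 3), D (t, x + Pi.single j 1) = D (t, x) := by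
    intro t x j
    set c : ℝ × (Fin 3 → ℝ) := ((0 : ℝ), Pi.single j 1) with hc
    have htr : ∀ q : ℝ × (Fin 3 → ℝ), HasFDerivAt (fun p => P (p + c)) (D (q + c)) q := by
      intro q
      exact (hPd (q + c)).comp q ((hasFDerivAt_id q).add_const c)
    have hfun : (fun p => P (p + c)) = P := by
      funext p
      show Φ (p.1 + 0) (p.2 + Pi.single j 1) = Φ p.1 p.2
      rw [add_zero, hper]
    have h1 : D ((t, x) + c) = D (t, x) := by
      have := htr (t, x)
      rw [hfun] at this
      exact this.unique (hPd (t, x))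
    have h2 : (t, x) + c = (t, x + Pi.single j 1) := by
      simp [hc, Prod.ext_iff]
    rw [← h2, h1]
  -- PDE in terms of D, D2
  have heq' : ∀ η > (0:ℝ), ∀ x, D2 (η, x) (1, 0) (1, 0) + (2 * ν + 1) / η * D (η, x) (1, 0)
      = w * ∑ i, D2 (η, x) (0, Pi.single i 1) (0, Pi.single i 1) := by
    intro η hη x
    have h0 := heq η hη x
    have h1 : deriv (fun t => Φ t x) = fun t => D (t, x) (1, 0) := funext fun t => hΦtd t x
    rw [h1] at h0
    rw [(hDt (1, 0) η x).deriv] at h0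
    rw [h0, lap3]
    congr 1
    exact Finset.sum_congr rfl fun i _ => hpd2 η x i
  -- continuity helpers
  have hconst : ∀ (t : ℝ), Continuous fun y : Fin 3 → ℝ => ((t, y) : ℝ × (Fin 3 → ℝ)) :=
    fun t => continuous_const.prodMk continuous_id
  have hcD : ∀ (v : ℝ × (Fin 3 → ℝ)), Continuous fun p => D p v := fun v =>
    hDc.clm_apply continuous_const
  have hcD2 : ∀ (u v : ℝ × (Fin 3 → ℝ)), Continuous fun p => D2 p u v := fun u v =>
    (hD2c.clm_apply continuous_const).clm_apply continuous_const
  -- the energy integrand and its time derivative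
  set F : ℝ → (Fin 3 → ℝ) → ℝ := fun t x =>
    (D (t, x) (1, 0)) ^ 2 + w * ∑ i, (D (t, x) (0, Pi.single i 1)) ^ 2 with hFdef
  set F' : ℝ → (Fin 3 → ℝ) → ℝ := fun t x =>
    2 * D (t, x) (1, 0) * D2 (t, x) (1, 0) (1, 0)
      + w * ∑ i, 2 * D (t, x) (0, Pi.single i 1) * D2 (t, x) (1, 0) (0, Pi.single i 1)
    with hF'def
  have hFd : ∀ (t : ℝ) x, HasDerivAt (fun s => F s x) (F' t x) t := by
    intro t x
    have h1 := (hDt (1, 0) t x).fun_pow 2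
    have h2 := (HasDerivAt.sum (fun i (_ : i ∈ Finset.univ) => (hDt (0, Pi.single i 1) t x).fun_pow 2)).const_mul w
    have h := h1.add h2
    refine h.congr_deriv ?_
    simp only [hF'def, pow_one]
    push_cast
    ring_nf
  have hFc : Continuous fun p : ℝ × (Fin 3 → ℝ) => F p.1 p.2 := by
    apply Continuous.add
    · exact (hcD (1, 0)).pow 2
    · exact continuous_const.mul (continuous_finset_sum _ fun i _ => (hcD (0, Pi.single i 1)).pow 2)
  have hF'c : Continuous fun p : ℝ × (Fin 3 → ℝ) => F' p.1 p.2 := by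
    apply Continuous.add
    · exact (continuous_const.mul (hcD (1, 0))).mul (hcD2 (1, 0) (1, 0))
    · exact continuous_const.mul (continuous_finset_sum _ fun i _ =>
        (continuous_const.mul (hcD (0, Pi.single i 1))).mul (hcD2 (1, 0) (0, Pi.single i 1)))
  -- E₁ in terms of F
  have hE₁ : ∀ t, E₁ t = (1 / 2) * ∫ x in torusBox, F t x := by
    intro t
    have hintg : ∀ x, deriv (fun s => Φ s x) t ^ 2 + w * gradSq (Φ t) x = F t x := by
      intro x
      rw [hΦtd t x]
      simp only [hFdef, gradSq]
      congr 2
      exact Finset.sum_congr rfl fun i _ => by rw [hpd t x i]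
    rw [hE t]
    simp only [hintg]
  -- integrability helper
  have intg : ∀ {g : (Fin 3 → ℝ) → ℝ}, Continuous g → IntegrableOn g torusBox volume :=
    fun h => h.continuousOn.integrableOn_compact isCompact_Icc
  intro η hη
  have hηne : η ≠ 0 := ne_of_gt hη
  -- derivative of the integral
  have hG : HasDerivAt (fun t => ∫ x in torusBox, F t x) (∫ x in torusBox, F' η x) η :=
    hasDerivAt_integral_box F F' η hFc hF'c hFd
  -- continuity of various spatial functions at time η
  have ca : Continuous fun x : Fin 3 → ℝ => D (η, x) (1, 0) :=
    (hcD (1, 0)).comp (hconst η)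
  have cb : ∀ i, Continuous fun x : Fin 3 → ℝ => D (η, x) (0, Pi.single i 1) :=
    fun i => (hcD (0, Pi.single i 1)).comp (hconst η)
  have cd2 : ∀ (u v : ℝ × (Fin 3 → ℝ)), Continuous fun x : Fin 3 → ℝ => D2 (η, x) u v :=
    fun u v => (hcD2 u v).comp (hconst η)
  -- the divergence identity
  set f : (Fin 3 → ℝ) → (Fin 3 → ℝ) := fun x i =>
    D (η, x) (1, 0) * D (η, x) (0, Pi.single i 1) with hfdef
  set f' : (Fin 3 → ℝ) → (Fin 3 → ℝ) →L[ℝ] (Fin 3 → ℝ) := fun x =>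
    ContinuousLinearMap.pi (fun i =>
      D (η, x) (1, 0) •
        (((ContinuousLinearMap.apply ℝ ℝ ((0 : ℝ), Pi.single i 1)).comp (D2 (η, x))).comp
          (ContinuousLinearMap.inr ℝ ℝ (Fin 3 → ℝ)))
      + D (η, x) (0, Pi.single i 1) •
        (((ContinuousLinearMap.apply ℝ ℝ ((1 : ℝ), (0 : Fin 3 → ℝ))).comp (D2 (η, x))).comp
          (ContinuousLinearMap.inr ℝ ℝ (Fin 3 → ℝ)))) with hf'def
  have hfd : ∀ x, HasFDerivAt f (f' x) x := by
    intro x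
    apply hasFDerivAt_pi''
    intro i
    have := (hDx (1, 0) η x).fun_mul (hDx (0, Pi.single i 1) η x)
    refine this.congr_fderiv ?_
    ext v; simp [hf'def]
  have hdivval : ∀ x, (∑ i, f' x (Pi.single i 1) i) =
      D (η, x) (1, 0) * (∑ i, D2 (η, x) (0, Pi.single i 1) (0, Pi.single i 1))
        + ∑ i, D (η, x) (0, Pi.single i 1) * D2 (η, x) (1, 0) (0, Pi.single i 1) := by
    intro x
    simp only [hf'def, ContinuousLinearMap.pi_apply, ContinuousLinearMap.add_apply,
      ContinuousLinearMap.coe_smul', Pi.smul_apply, ContinuousLinearMap.coe_comp',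
      Function.comp_apply, ContinuousLinearMap.inr_apply, ContinuousLinearMap.apply_apply,
      smul_eq_mul]
    rw [Finset.sum_add_distrib, ← Finset.mul_sum]
    congr 1
    exact Finset.sum_congr rfl fun i _ => by rw [hsym (η, x) (0, Pi.single i 1) (1, 0)]
  have hdc : Continuous fun x => ∑ i, f' x (Pi.single i 1) i := by
    have : (fun x => ∑ i, f' x (Pi.single i 1) i) = fun x =>
        D (η, x) (1, 0) * (∑ i, D2 (η, x) (0, Pi.single i 1) (0, Pi.single i 1))
          + ∑ i, D (η, x) (0, Pi.single i 1) * D2 (η, x) (1, 0) (0, Pi.single i 1) :=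
      funext hdivval
    rw [this]
    exact (ca.mul (continuous_finset_sum _ fun i _ => cd2 _ _)).add
      (continuous_finset_sum _ fun i _ => (cb i).mul (cd2 _ _))
  have hfp : ∀ x i, f (x + Pi.single i 1) i = f x i := by
    intro x i
    simp only [hfdef, hDper η x i]
  have hdiv : ∫ x in torusBox,
      (D (η, x) (1, 0) * (∑ i, D2 (η, x) (0, Pi.single i 1) (0, Pi.single i 1))
        + ∑ i, D (η, x) (0, Pi.single i 1) * D2 (η, x) (1, 0) (0, Pi.single i 1)) = 0 := by
    have h0 := periodic_div_integral_zero f f' hfd hdc hfp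
    simp only [hdivval] at h0
    exact h0
  -- pointwise form of F' η using the PDE
  have hF'val : ∀ x, F' η x =
      (2 * w) * (D (η, x) (1, 0) * (∑ i, D2 (η, x) (0, Pi.single i 1) (0, Pi.single i 1))
          + ∑ i, D (η, x) (0, Pi.single i 1) * D2 (η, x) (1, 0) (0, Pi.single i 1))
        - (2 * (2 * ν + 1) / η) * (D (η, x) (1, 0)) ^ 2 := by
    intro x
    have h := heq' η hη x
    have hDtt : D2 (η, x) (1, 0) (1, 0)
        = w * (∑ i, D2 (η, x) (0, Pi.single i 1) (0, Pi.single i 1))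
          - (2 * ν + 1) / η * D (η, x) (1, 0) := by linarith
    simp only [hF'def]
    rw [hDtt]
    rw [show (∑ i, 2 * D (η, x) (0, Pi.single i 1) * D2 (η, x) (1, 0) (0, Pi.single i 1))
        = 2 * ∑ i, D (η, x) (0, Pi.single i 1) * D2 (η, x) (1, 0) (0, Pi.single i 1) from by
      rw [Finset.mul_sum]; exact Finset.sum_congr rfl fun i _ => by ring]
    ring
  -- value of the derivative of the integral
  have hDIVc : Continuous fun x =>
      D (η, x) (1, 0) * (∑ i, D2 (η, x) (0, Pi.single i 1) (0, Pi.single i 1))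
        + ∑ i, D (η, x) (0, Pi.single i 1) * D2 (η, x) (1, 0) (0, Pi.single i 1) :=
    (ca.mul (continuous_finset_sum _ fun i _ => cd2 _ _)).add
      (continuous_finset_sum _ fun i _ => (cb i).mul (cd2 _ _))
  have hF'int : (∫ x in torusBox, F' η x)
      = -(2 * (2 * ν + 1) / η) * ∫ x in torusBox, (D (η, x) (1, 0)) ^ 2 := by
    have h1 : (∫ x in torusBox, F' η x) = ∫ x in torusBox,
        ((2 * w) * (D (η, x) (1, 0) * (∑ i, D2 (η, x) (0, Pi.single i 1) (0, Pi.single i 1))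
          + ∑ i, D (η, x) (0, Pi.single i 1) * D2 (η, x) (1, 0) (0, Pi.single i 1))
        - (2 * (2 * ν + 1) / η) * (D (η, x) (1, 0)) ^ 2) := by
      simp only [hF'val]
    rw [h1, integral_sub (by exact (intg (continuous_const.mul hDIVc)))
      (by exact (intg (continuous_const.mul (ca.pow 2))))]
    rw [integral_const_mul, integral_const_mul, hdiv]
    ring
  -- split the energy integral
  have hgradeq : ∀ x, w * gradSq (Φ η) x
      = w * ∑ i, (D (η, x) (0, Pi.single i 1)) ^ 2 := by
    intro x
    simp only [gradSq]
    congr 1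
    exact Finset.sum_congr rfl fun i _ => by rw [hpd η x i]
  have hgradint : (∫ x in torusBox, w * gradSq (Φ η) x)
      = w * ∫ x in torusBox, ∑ i, (D (η, x) (0, Pi.single i 1)) ^ 2 := by
    simp only [hgradeq]
    rw [integral_const_mul]
  have hFsplit : (∫ x in torusBox, F η x)
      = (∫ x in torusBox, (D (η, x) (1, 0)) ^ 2)
        + w * ∫ x in torusBox, ∑ i, (D (η, x) (0, Pi.single i 1)) ^ 2 := by
    simp only [hFdef]
    rw [integral_add (by exact intg (ca.pow 2))
      (by exact intg (continuous_const.mul (continuous_finset_sum _ fun i _ => (cb i).pow 2)))]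
    rw [integral_const_mul]
  -- final assembly
  have hrpow := Real.hasDerivAt_rpow_const (x := η) (p := 2 * (2 * ν + 1)) (Or.inl hηne)
  have hfin := hrpow.mul (hG.const_mul (1 / 2 : ℝ))
  have hgoal : HasDerivAt (fun t => t ^ (2 * (2 * ν + 1)) * ((1 / 2) * ∫ x in torusBox, F t x))
      ((2 * (2 * ν + 1)) * η ^ (2 * (2 * ν + 1) - 1) * ((1 / 2) * ∫ x in torusBox, F η x)
        + η ^ (2 * (2 * ν + 1)) * ((1 / 2) * ∫ x in torusBox, F' η x)) η := hfin
  have hfun : (fun t => t ^ (2 * (2 * ν + 1)) * E₁ t)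
      = fun t => t ^ (2 * (2 * ν + 1)) * ((1 / 2) * ∫ x in torusBox, F t x) := by
    funext t
    rw [hE₁ t]
  rw [hfun, hgradint]
  convert hgoal using 1
  rw [hF'int, hFsplit]
  have e3 : η ^ (4 * ν + 1 : ℝ) = η ^ (4 * ν : ℝ) * η := Real.rpow_add_one hηne _
  have e2 : η ^ (2 * (2 * ν + 1) - 1 : ℝ) = η ^ (4 * ν : ℝ) * η := by
    rw [show (2 * (2 * ν + 1) - 1 : ℝ) = 4 * ν + 1 by ring, Real.rpow_add_one hηne]
  have e1 : η ^ (2 * (2 * ν + 1) : ℝ) = η ^ (4 * ν : ℝ) * η * η := by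
    rw [show (2 * (2 * ν + 1) : ℝ) = (4 * ν + 1) + 1 by ring, Real.rpow_add_one hηne,
      Real.rpow_add_one hηne]
  rw [e2, e1, e3]
  set K := η ^ (4 * ν : ℝ) with hK
  clear_value K
  field_simp
  ring
end

section
/- Let w > 0, ν ≥ 1, and k ∈ ℝ³ with k ≠ 0. Let ψ̂ : [η₁,∞) → ℝ be a solution of ψ̂'' = −w|k|²ψ̂ + (ν² − 1/4)η^{−2}ψ̂. Then there exist constants W̄ ≥ 0 and η̄ such that ψ̂(η) = W̄·cos(√w·|k|·(η − η̄)) + O(η^{−1}) as η → ∞. -/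
/-!
With `ω = √w ‖k‖` the equation is the free oscillator `ψ'' = -ω²ψ` perturbed by `qψ`, where
`|q η| ≤ K / η²`. In the frame rotating with the free oscillation, `Z = (ψ + iψ'/ω) e^{iωη}`
(the paper's polar coordinates `r e^{iθ}`, turned by `ωη`), the equation reads
`Z' = i (qψ/ω) e^{iωη}`. A Gronwall argument on the energy `‖Z‖² = ψ² + (ψ'/ω)²` shows that `Z`
stays bounded, so `‖Z'‖ = O(η⁻²)`. Hence `Z` has a limit `L` with `‖Z - L‖ = O(η⁻¹)`, and
`ψ = Re (Z e^{-iωη})` is within `O(η⁻¹)` of `Re (L e^{-iωη}) = ‖L‖ cos (ω (η - arg L / ω))`.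
-/

open Filter Topology Set Complex

lemma nonneg_of_le_div_sq {a C t : ℝ} (ht : 0 < t) (h : a ≤ C / t ^ 2) (ha : 0 ≤ a) : 0 ≤ C := by
  simpa using (le_div_iff₀ (by positivity : 0 < t ^ 2)).1 (ha.trans h)

section InverseSquareDerivative

variable {E : Type*} [NormedAddCommGroup E] [NormedSpace ℝ E] {f f' : ℝ → E} {C t₀ : ℝ}

theorem norm_sub_le_of_norm_deriv_le_div_sq (ht₀ : 0 < t₀)
    (hf : ∀ η ≥ t₀, HasDerivAt f (f' η) η) (hf' : ∀ η ≥ t₀, ‖f' η‖ ≤ C / η ^ 2)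
    {x y : ℝ} (hx : t₀ ≤ x) (hxy : x ≤ y) : ‖f y - f x‖ ≤ C / x := by
  have hC : 0 ≤ C := nonneg_of_le_div_sq ht₀ (hf' t₀ le_rfl) (norm_nonneg _)
  have hB : ∀ η ∈ Icc x y, HasDerivAt (fun η => C * (x⁻¹ - η⁻¹)) (C / η ^ 2) η := fun η hη => by
    have hη : η ≠ 0 := (ht₀.trans_le (hx.trans hη.1)).ne'
    exact (((hasDerivAt_inv hη).const_sub x⁻¹).const_mul C).congr_deriv (by ring)
  have hfence := image_norm_le_of_norm_deriv_right_le_deriv_boundary'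
    (f := fun η => f η - f x) (B := fun η => C * (x⁻¹ - η⁻¹))
    (fun η hη => ((hf η (hx.trans hη.1)).sub_const (f x)).continuousAt.continuousWithinAt)
    (fun η hη => ((hf η (hx.trans hη.1)).sub_const (f x)).hasDerivWithinAt)
    (by simp) (fun η hη => (hB η hη).continuousAt.continuousWithinAt)
    (fun η hη => (hB η (Ico_subset_Icc_self hη)).hasDerivWithinAt)
    (fun η hη => hf' η (hx.trans hη.1)) ⟨hxy, le_rfl⟩
  have hy : 0 < y := ht₀.trans_le (hx.trans hxy)
  calc ‖f y - f x‖ ≤ C * (x⁻¹ - y⁻¹) := hfence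
    _ ≤ C / x := by rw [div_eq_mul_inv]; gcongr; linarith [inv_pos.2 hy]

theorem exists_norm_sub_le_of_norm_deriv_le_div_sq [CompleteSpace E] (ht₀ : 0 < t₀)
    (hf : ∀ η ≥ t₀, HasDerivAt f (f' η) η) (hf' : ∀ η ≥ t₀, ‖f' η‖ ≤ C / η ^ 2) :
    ∃ L, ∀ η ≥ t₀, ‖f η - L‖ ≤ C / η := by
  have hdecay : Tendsto (fun η : ℝ => C / η) atTop (𝓝 0) :=
    tendsto_const_nhds.div_atTop tendsto_id
  have hcauchy : CauchySeq f := Metric.cauchySeq_iff'.2 fun ε hε => by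
    obtain ⟨N, hNε, hN⟩ :=
      ((hdecay.eventually (gt_mem_nhds hε)).and (eventually_ge_atTop t₀)).exists
    exact ⟨N, fun n hn => dist_eq_norm (f n) (f N) ▸
      (norm_sub_le_of_norm_deriv_le_div_sq ht₀ hf hf' hN hn).trans_lt hNε⟩
  obtain ⟨L, hL⟩ := cauchySeq_tendsto_of_complete hcauchy
  refine ⟨L, fun η hη => ?_⟩
  rw [norm_sub_rev]
  refine le_of_tendsto (hL.sub_const (f η)).norm ?_
  filter_upwards [eventually_ge_atTop η] with y hy
  exact norm_sub_le_of_norm_deriv_le_div_sq ht₀ hf hf' hη hy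

end InverseSquareDerivative

theorem antitoneOn_mul_exp_div_of_deriv_le {F F' : ℝ → ℝ} {K t₀ : ℝ} (ht₀ : 0 < t₀)
    (hF : ∀ η ≥ t₀, HasDerivAt F (F' η) η) (hF' : ∀ η ≥ t₀, F' η ≤ K / η ^ 2 * F η) :
    AntitoneOn (fun η => F η * Real.exp (K / η)) (Ici t₀) := by
  have hG : ∀ η ≥ t₀, HasDerivAt (fun η => F η * Real.exp (K / η))
      (Real.exp (K / η) * (F' η - K / η ^ 2 * F η)) η := fun η hη => by
    refine ((hF η hη).fun_mul
      ((hasDerivAt_inv (ht₀.trans_le hη).ne').const_mul K).exp).congr_deriv ?_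
    simp only [div_eq_mul_inv]
    ring
  refine antitoneOn_of_hasDerivWithinAt_nonpos (convex_Ici t₀)
    (fun η hη => (hG η hη).continuousAt.continuousWithinAt)
    (fun η hη => (hG η (interior_subset hη)).hasDerivWithinAt) fun η hη => ?_
  exact mul_nonpos_of_nonneg_of_nonpos (Real.exp_pos _).le
    (sub_nonpos.2 (hF' η (interior_subset hη)))

noncomputable def rotatingFrame (ω : ℝ) (ψ v : ℝ → ℝ) (η : ℝ) : ℂ :=
  (ψ η + v η / ω * I) * exp ((ω * η : ℝ) * I)

section PerturbedOscillator

variable {ω : ℝ} {ψ v : ℝ → ℝ}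

theorem hasDerivAt_rotatingFrame (hω : ω ≠ 0) {η a : ℝ} (hψ : HasDerivAt ψ (v η) η)
    (hv : HasDerivAt v (-ω ^ 2 * ψ η + a) η) :
    HasDerivAt (rotatingFrame ω ψ v) (a / ω * I * exp ((ω * η : ℝ) * I)) η := by
  have hphase : HasDerivAt (fun η : ℝ => ((ω * η : ℝ) : ℂ) * I) (ω * I) η := by
    simpa using (((hasDerivAt_id η).const_mul ω).ofReal_comp).mul_const I
  refine ((hψ.ofReal_comp.fun_add ((hv.ofReal_comp.div_const (ω : ℂ)).mul_const I)).fun_mul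
    hphase.cexp).congr_deriv ?_
  have hω' : (ω : ℂ) ≠ 0 := ofReal_ne_zero.2 hω
  push_cast
  linear_combination
    exp (ω * η * I) * (v η * I_sq + (v η * I ^ 2 - ψ η * ω * I) * mul_inv_cancel₀ hω')

theorem norm_rotatingFrame_sq (η : ℝ) :
    ‖rotatingFrame ω ψ v η‖ ^ 2 = ψ η ^ 2 + (v η / ω) ^ 2 := by
  rw [rotatingFrame, norm_mul, norm_exp_ofReal_mul_I, mul_one, ← ofReal_div,
    Complex.sq_norm, normSq_add_mul_I]

theorem re_rotatingFrame_mul_exp (η : ℝ) :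
    (rotatingFrame ω ψ v η * exp ((-(ω * η) : ℝ) * I)).re = ψ η := by
  rw [rotatingFrame, mul_assoc, ← Complex.exp_add]
  simp

theorem re_mul_exp_neg_mul_I (L : ℂ) (t : ℝ) :
    (L * exp ((-t : ℝ) * I)).re = ‖L‖ * Real.cos (t - arg L) := by
  conv_lhs => rw [← norm_mul_exp_arg_mul_I L]
  rw [mul_assoc, ← Complex.exp_add, ← add_mul, re_ofReal_mul, ← ofReal_add,
    exp_ofReal_mul_I_re, ← Real.cos_neg]
  ring_nf

theorem abs_le_norm_rotatingFrame (η : ℝ) : |ψ η| ≤ ‖rotatingFrame ω ψ v η‖ := by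
  calc |ψ η| = |(rotatingFrame ω ψ v η * exp ((-(ω * η) : ℝ) * I)).re| := by
        rw [re_rotatingFrame_mul_exp]
    _ ≤ ‖rotatingFrame ω ψ v η‖ :=
        (abs_re_le_norm _).trans_eq (by rw [norm_mul, norm_exp_ofReal_mul_I, mul_one])

variable {q : ℝ → ℝ} {K t₀ : ℝ} (hω : 0 < ω) (ht₀ : 0 < t₀)
  (hψ : ∀ η ≥ t₀, HasDerivAt ψ (v η) η)
  (hv : ∀ η ≥ t₀, HasDerivAt v (-ω ^ 2 * ψ η + q η * ψ η) η)
  (hq : ∀ η ≥ t₀, |q η| ≤ K / η ^ 2)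
include hω ht₀ hψ hv hq

theorem exists_norm_rotatingFrame_le : ∃ M, ∀ η ≥ t₀, ‖rotatingFrame ω ψ v η‖ ≤ M := by
  have hK : 0 ≤ K := nonneg_of_le_div_sq ht₀ (hq t₀ le_rfl) (abs_nonneg _)
  have hω0 : ω ≠ 0 := hω.ne'
  set F : ℝ → ℝ := fun η => ψ η ^ 2 + (v η / ω) ^ 2
  have hF : ∀ η ≥ t₀, HasDerivAt F (2 * q η * ψ η * v η / ω ^ 2) η := fun η hη => by
    refine (((hψ η hη).fun_pow 2).fun_add (((hv η hη).div_const ω).fun_pow 2)).congr_deriv ?_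
    norm_num
    field_simp
    ring
  have hF' : ∀ η ≥ t₀, 2 * q η * ψ η * v η / ω ^ 2 ≤ K / ω / η ^ 2 * F η := fun η hη => by
    have hamgm : 2 * |ψ η| * |v η / ω| ≤ F η := by
      simpa only [sq_abs] using two_mul_le_add_sq |ψ η| |v η / ω|
    calc 2 * q η * ψ η * v η / ω ^ 2 = q η / ω * (2 * ψ η * (v η / ω)) := by field_simp
      _ ≤ |q η / ω * (2 * ψ η * (v η / ω))| := le_abs_self _
      _ = |q η| / ω * (2 * |ψ η| * |v η / ω|) := by
          rw [abs_mul, abs_div, abs_of_pos hω, abs_mul, abs_mul, abs_two]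
      _ ≤ K / η ^ 2 / ω * F η := by gcongr; exact hq η hη
      _ = K / ω / η ^ 2 * F η := by rw [div_right_comm]
  refine ⟨√(F t₀ * Real.exp (K / ω / t₀)), fun η hη => ?_⟩
  have hdecr := antitoneOn_mul_exp_div_of_deriv_le ht₀ hF hF' self_mem_Ici hη hη
  rw [← Real.sqrt_sq (norm_nonneg _), norm_rotatingFrame_sq]
  refine Real.sqrt_le_sqrt (le_trans ?_ hdecr)
  exact le_mul_of_one_le_right (add_nonneg (sq_nonneg _) (sq_nonneg _))
    (Real.one_le_exp (div_nonneg (div_nonneg hK hω.le) (ht₀.trans_le hη).le))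

theorem exists_isBigO_sub_cos_of_perturbed_oscillator :
    ∃ W θ : ℝ, 0 ≤ W ∧
      (fun η => ψ η - W * Real.cos (ω * (η - θ))) =O[atTop] (fun η => η⁻¹) := by
  obtain ⟨M, hM⟩ := exists_norm_rotatingFrame_le hω ht₀ hψ hv hq
  have hderiv_le : ∀ η ≥ t₀,
      ‖((q η * ψ η : ℝ) : ℂ) / ω * I * exp ((ω * η : ℝ) * I)‖ ≤ K * M / ω / η ^ 2 :=
    fun η hη => by
      rw [norm_mul, norm_exp_ofReal_mul_I, mul_one, norm_mul, norm_I, mul_one,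
        norm_div, norm_real, norm_real, Real.norm_eq_abs, Real.norm_of_nonneg hω.le, abs_mul,
        div_right_comm]
      calc |q η| * |ψ η| / ω ≤ K / η ^ 2 * M / ω := by
            have hψM := (abs_le_norm_rotatingFrame η).trans (hM η hη)
            gcongr
            exacts [(abs_nonneg _).trans (hq η hη), hq η hη]
        _ = K * M / η ^ 2 / ω := by ring
  obtain ⟨L, hL⟩ := exists_norm_sub_le_of_norm_deriv_le_div_sq ht₀
    (fun η hη => hasDerivAt_rotatingFrame hω.ne' (hψ η hη) (hv η hη)) hderiv_le
  refine ⟨‖L‖, arg L / ω, norm_nonneg L, Asymptotics.IsBigO.of_bound (K * M / ω) ?_⟩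
  filter_upwards [eventually_ge_atTop t₀] with η hη
  have hdiff : ψ η - ‖L‖ * Real.cos (ω * (η - arg L / ω))
      = ((rotatingFrame ω ψ v η - L) * exp ((-(ω * η) : ℝ) * I)).re := by
    rw [sub_mul, sub_re, re_rotatingFrame_mul_exp, re_mul_exp_neg_mul_I, mul_sub,
      mul_div_cancel₀ _ hω.ne']
  calc ‖ψ η - ‖L‖ * Real.cos (ω * (η - arg L / ω))‖
      ≤ ‖rotatingFrame ω ψ v η - L‖ := by
        rw [hdiff, Real.norm_eq_abs]
        exact (abs_re_le_norm _).trans_eq (by rw [norm_mul, norm_exp_ofReal_mul_I, mul_one])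
    _ ≤ K * M / ω / η := hL η hη
    _ = K * M / ω * ‖η⁻¹‖ := by
        rw [norm_inv, Real.norm_of_nonneg (ht₀.trans_le hη).le, div_eq_mul_inv]

end PerturbedOscillator

theorem stmt_10_general (w ν η₁ : ℝ) (hw : 0 < w)
    (k : EuclideanSpace ℝ (Fin 3)) (hk : k ≠ 0)
    (ψ : ℝ → ℝ) (hψ : ContDiffOn ℝ 2 ψ (Set.Ici η₁))
    (heq : ∀ η ≥ η₁, deriv (deriv ψ) η
        = -w * ‖k‖ ^ 2 * ψ η + (ν ^ 2 - 1 / 4) * η ^ (-2 : ℤ) * ψ η) :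
    ∃ Wbar ηbar : ℝ, 0 ≤ Wbar ∧
      (fun η => ψ η - Wbar * Real.cos (Real.sqrt w * ‖k‖ * (η - ηbar)))
        =O[atTop] (fun η => η⁻¹) := by
  set t₀ := max η₁ 0 + 1
  have ht₀ : 0 < t₀ := by positivity
  have hη₁ : ∀ η ≥ t₀, η ∈ Ioi η₁ := fun η hη => (le_max_left η₁ 0).trans_lt (by linarith)
  have hω : 0 < √w * ‖k‖ := by have := norm_pos_iff.2 hk; positivity
  have hψ' : ContDiffOn ℝ 2 ψ (Ioi η₁) := hψ.mono Ioi_subset_Ici_self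
  have hv : ContDiffOn ℝ 1 (deriv ψ) (Ioi η₁) := hψ'.deriv_of_isOpen isOpen_Ioi (by norm_num)
  refine exists_isBigO_sub_cos_of_perturbed_oscillator (v := deriv ψ)
    (q := fun η => (ν ^ 2 - 1 / 4) * η ^ (-2 : ℤ)) (K := |ν ^ 2 - 1 / 4|) hω ht₀
    (fun η hη => ((hψ'.contDiffAt (isOpen_Ioi.mem_nhds (hη₁ η hη))).differentiableAt
      (by norm_num)).hasDerivAt) (fun η hη => ?_) (fun η hη => ?_)
  · have := ((hv.contDiffAt (isOpen_Ioi.mem_nhds (hη₁ η hη))).differentiableAt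
      (by norm_num)).hasDerivAt
    rwa [mul_pow, Real.sq_sqrt hw.le, ← neg_mul, ← heq η (hη₁ η hη).le]
  · rw [abs_mul, zpow_neg, zpow_ofNat, abs_inv, abs_of_pos (pow_pos (ht₀.trans_le hη) 2)]
    exact (div_eq_mul_inv _ _).ge

/-- Asymptotics of solutions of the mode equation
`ψ̂'' = -w|k|²ψ̂ + (ν² - 1/4)η^{-2}ψ̂`: every solution satisfies
`ψ̂(η) = W̄ cos(√w |k| (η - η̄)) + O(η^{-1})` as `η → ∞`. -/
theorem stmt_10 (w ν η₁ : ℝ) (hw : 0 < w) (hν : 1 ≤ ν) (hη₁ : 0 < η₁)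
    (k : EuclideanSpace ℝ (Fin 3)) (hk : k ≠ 0)
    (ψ : ℝ → ℝ) (hψ : ContDiffOn ℝ 2 ψ (Set.Ici η₁))
    (heq : ∀ η ≥ η₁, deriv (deriv ψ) η
        = -w * ‖k‖ ^ 2 * ψ η + (ν ^ 2 - 1 / 4) * η ^ (-2 : ℤ) * ψ η) :
    ∃ Wbar ηbar : ℝ, 0 ≤ Wbar ∧
      (fun η => ψ η - Wbar * Real.cos (Real.sqrt w * ‖k‖ * (η - ηbar)))
        =O[atTop] (fun η => η⁻¹) :=
  stmt_10_general w ν η₁ hw k hk ψ hψ heq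
end

section
/- Let w > 0, ν ≥ 1, k ≠ 0, and let ψ̂ : [η₁,∞) → ℝ solve ψ̂'' = −w|k|²ψ̂ + (ν²−1/4)η^{−2}ψ̂. If ψ̂(η) → 0 and ψ̂'(η) → 0 as η → ∞, then ψ̂ ≡ 0. -/
/-!
Energy method. For `ψ'' = -c ψ + q ψ` with `c > 0` and `|q η| ≤ M η⁻²`, the energy
`E = c ψ² + ψ'²` satisfies `E' = 2 q ψ ψ' ≥ -M (1 + c⁻¹) η⁻² E`. Since `η⁻²` is integrable
at infinity, `E η · exp (-M (1 + c⁻¹) / η)` is nondecreasing with a bounded weight; it tends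
to `0`, hence it is `≤ 0`, so `E` and with it `ψ` vanish.
-/

open Filter Set Topology Real

lemma MonotoneOn.nonpos_of_tendsto_zero {f : ℝ → ℝ} {a t : ℝ} (hf : MonotoneOn f (Ioi a))
    (hlim : Tendsto f atTop (𝓝 0)) (ht : a < t) : f t ≤ 0 :=
  ge_of_tendsto hlim <| (eventually_ge_atTop t).mono fun _ hT => hf ht (ht.trans_le hT) hT

lemma nonpos_of_hasDerivAt_ge_neg_mul {E E' K k : ℝ → ℝ} {a L t : ℝ}
    (hE : ∀ s > a, HasDerivAt E (E' s) s) (hK : ∀ s > a, HasDerivAt K (k s) s)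
    (hineq : ∀ s > a, -(k s * E s) ≤ E' s)
    (hE0 : Tendsto E atTop (𝓝 0)) (hKL : Tendsto K atTop (𝓝 L)) (ht : a < t) : E t ≤ 0 := by
  have hG : ∀ s > a, HasDerivAt (fun s => E s * exp (K s))
      (exp (K s) * (E' s + k s * E s)) s := fun s hs =>
    ((hE s hs).mul (hK s hs).exp).congr_deriv (by ring)
  have hmono : MonotoneOn (fun s => E s * exp (K s)) (Ioi a) := by
    refine monotoneOn_of_hasDerivWithinAt_nonneg (convex_Ioi a)
      (fun s hs => (hG s hs).continuousAt.continuousWithinAt)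
      (fun s hs => (hG s (interior_subset hs)).hasDerivWithinAt) fun s hs => ?_
    rw [interior_Ioi] at hs
    exact mul_nonneg (exp_pos _).le (by linarith [hineq s hs])
  have hlim : Tendsto (fun s => E s * exp (K s)) atTop (𝓝 0) := by
    simpa using hE0.mul ((continuous_exp.tendsto L).comp hKL)
  exact nonpos_of_mul_nonpos_left (hmono.nonpos_of_tendsto_zero hlim ht) (exp_pos _)

lemma neg_abs_mul_energy_le {c q x y : ℝ} (hc : 0 < c) :
    -(|q| * (1 + c⁻¹) * (c * x ^ 2 + y ^ 2)) ≤ 2 * q * x * y := by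
  have hcross : -(|q| * (x ^ 2 + y ^ 2)) ≤ 2 * q * x * y := by
    have := neg_abs_le (2 * q * x * y)
    rw [abs_mul, abs_mul, abs_mul, abs_two] at this
    nlinarith [abs_nonneg q, two_mul_le_add_sq |x| |y|, sq_abs x, sq_abs y]
  have hweight : |q| * (x ^ 2 + y ^ 2) ≤ |q| * (1 + c⁻¹) * (c * x ^ 2 + y ^ 2) := by
    have : |q| * (1 + c⁻¹) * (c * x ^ 2 + y ^ 2)
        = |q| * (x ^ 2 + y ^ 2) + |q| * (c * x ^ 2 + c⁻¹ * y ^ 2) := by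
      field_simp; ring
    rw [this]
    exact le_add_of_nonneg_right (by positivity)
  linarith

lemma ContDiffOn.hasDerivAt_deriv_deriv {f : ℝ → ℝ} {s : Set ℝ} {x : ℝ}
    (hf : ContDiffOn ℝ 2 f s) (hs : IsOpen s) (hx : x ∈ s) :
    HasDerivAt f (deriv f x) x ∧ HasDerivAt (deriv f) (deriv (deriv f) x) x := by
  have hf' : ContDiffOn ℝ 1 (deriv f) s := hf.deriv_of_isOpen hs (by norm_num)
  exact ⟨((hf.contDiffAt (hs.mem_nhds hx)).differentiableAt (by norm_num)).hasDerivAt,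
    ((hf'.contDiffAt (hs.mem_nhds hx)).differentiableAt (by norm_num)).hasDerivAt⟩

theorem eqOn_zero_of_tendsto_of_deriv_deriv_eq {ψ q : ℝ → ℝ} {c M η₁ : ℝ} (hc : 0 < c)
    (hη₁ : 0 ≤ η₁) (hψ : ContDiffOn ℝ 2 ψ (Ioi η₁))
    (hode : ∀ t > η₁, deriv (deriv ψ) t = -c * ψ t + q t * ψ t)
    (hq : ∀ t > η₁, |q t| ≤ M * (t ^ 2)⁻¹)
    (hlim : Tendsto ψ atTop (𝓝 0)) (hlim' : Tendsto (deriv ψ) atTop (𝓝 0)) :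
    EqOn ψ 0 (Ioi η₁) := by
  set E : ℝ → ℝ := fun t => c * ψ t ^ 2 + deriv ψ t ^ 2
  set N := M * (1 + c⁻¹)
  have hE_deriv : ∀ t > η₁, HasDerivAt E (2 * q t * ψ t * deriv ψ t) t := fun t ht => by
    obtain ⟨h1, h2⟩ := hψ.hasDerivAt_deriv_deriv isOpen_Ioi ht
    exact ((h1.pow 2).const_mul c |>.add (h2.pow 2)).congr_deriv (by rw [hode t ht]; ring)
  have hK : ∀ t > η₁, HasDerivAt (fun s => -N * s⁻¹) (N * (t ^ 2)⁻¹) t := fun t ht =>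
    ((hasDerivAt_inv (hη₁.trans_lt ht).ne').const_mul (-N)).congr_deriv (by ring)
  have hineq : ∀ t > η₁, -(N * (t ^ 2)⁻¹ * E t) ≤ 2 * q t * ψ t * deriv ψ t := by
    intro t ht
    have hE0 : 0 ≤ E t := by positivity
    have hweight : |q t| * (1 + c⁻¹) ≤ N * (t ^ 2)⁻¹ :=
      calc |q t| * (1 + c⁻¹) ≤ M * (t ^ 2)⁻¹ * (1 + c⁻¹) := by gcongr; exact hq t ht
        _ = N * (t ^ 2)⁻¹ := by ring
    linarith [mul_le_mul_of_nonneg_right hweight hE0,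
      neg_abs_mul_energy_le (q := q t) (x := ψ t) (y := deriv ψ t) hc]
  have hE_lim : Tendsto E atTop (𝓝 0) := by
    simpa using ((hlim.pow 2).const_mul c).add (hlim'.pow 2)
  have hK_lim : Tendsto (fun s : ℝ => -N * s⁻¹) atTop (𝓝 0) := by
    simpa using tendsto_inv_atTop_zero.const_mul (-N)
  intro t ht
  have hEt : E t ≤ 0 := nonpos_of_hasDerivAt_ge_neg_mul hE_deriv hK hineq hE_lim hK_lim ht
  have : ψ t ^ 2 * c ≤ 0 := by nlinarith [sq_nonneg (deriv ψ t)]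
  simpa using nonpos_of_mul_nonpos_left this hc

theorem stmt_11_general (w ν η₁ : ℝ) (hw : 0 < w) (hη₁ : 0 < η₁)
    (k : EuclideanSpace ℝ (Fin 3)) (hk : k ≠ 0)
    (ψ : ℝ → ℝ) (hψ : ContDiffOn ℝ 2 ψ (Set.Ici η₁))
    (heq : ∀ η ≥ η₁, deriv (deriv ψ) η
        = -w * ‖k‖ ^ 2 * ψ η + (ν ^ 2 - 1 / 4) * η ^ (-2 : ℤ) * ψ η)
    (hlim : Tendsto ψ atTop (nhds 0))
    (hlim' : Tendsto (deriv ψ) atTop (nhds 0)) :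
    ∀ η ≥ η₁, ψ η = 0 := by
  have hc : 0 < w * ‖k‖ ^ 2 := by
    have := norm_pos_iff.mpr hk
    positivity
  have hIoi : EqOn ψ 0 (Ioi η₁) :=
    eqOn_zero_of_tendsto_of_deriv_deriv_eq (q := fun t => (ν ^ 2 - 1 / 4) * t ^ (-2 : ℤ))
      (M := |ν ^ 2 - 1 / 4|) hc hη₁.le (hψ.mono Ioi_subset_Ici_self)
      (fun t ht => by rw [heq t ht.le]; ring)
      (fun t _ => by rw [abs_mul, abs_of_nonneg (even_two.neg.zpow_nonneg t), zpow_neg, zpow_ofNat])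
      hlim hlim'
  exact fun η hη => hIoi.of_subset_closure hψ.continuousOn continuousOn_const
    Ioi_subset_Ici_self (closure_Ioi η₁).ge hη

/-- A solution of the mode equation `ψ̂'' = -w|k|²ψ̂ + (ν²-1/4)η^{-2}ψ̂` which
tends to zero, together with its derivative, as `η → ∞`, vanishes identically. -/
theorem stmt_11 (w ν η₁ : ℝ) (hw : 0 < w) (hν : 1 ≤ ν) (hη₁ : 0 < η₁)
    (k : EuclideanSpace ℝ (Fin 3)) (hk : k ≠ 0)
    (ψ : ℝ → ℝ) (hψ : ContDiffOn ℝ 2 ψ (Set.Ici η₁))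
    (heq : ∀ η ≥ η₁, deriv (deriv ψ) η
        = -w * ‖k‖ ^ 2 * ψ η + (ν ^ 2 - 1 / 4) * η ^ (-2 : ℤ) * ψ η)
    (hlim : Tendsto ψ atTop (nhds 0))
    (hlim' : Tendsto (deriv ψ) atTop (nhds 0)) :
    ∀ η ≥ η₁, ψ η = 0 :=
  stmt_11_general w ν η₁ hw hη₁ k hk ψ hψ heq hlim hlim'
end
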